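/- arXiv:0910.1134 — 6 statements merged into one kernel-verified Lean document; each statement's English description precedes it below -/
import Mathlib

section
/- Let M be an (n+1)×n matrix whose rows are points of ℝ^n, and let [1|M] be the (n+1)×(n+1) matrix formed by prepending a column of ones. If M has its last n−k columns equal to zero in its first k+1 rows (block form with a k×k block A in rows 2..k+1 and an (n−k)×(n−k) block B in the last rows after row reduction), then |det[1|M]| = |det A| · |det B|. In particular, if a simplex has an exterior face spanned by rows whose complementary block is B and exterior facet corresponds to B being 1×1 with entry in {0,1} and nonzero determinant, then the class of the exterior facet of a nondegenerate simplex equals the class of the simplex. -/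
/-- The square matrix `[1|M]` obtained from an `(n+1) × n` matrix `M` (with `n = k + m`,
rows indexed by `(Unit ⊕ Fin k) ⊕ Fin m` and columns by `Fin k ⊕ Fin m`) by prepending a
column of ones. -/
def augMat (k m : ℕ) (M : Matrix ((Unit ⊕ Fin k) ⊕ Fin m) (Fin k ⊕ Fin m) ℝ) :
    Matrix ((Unit ⊕ Fin k) ⊕ Fin m) ((Unit ⊕ Fin k) ⊕ Fin m) ℝ :=
  Matrix.of fun r c =>
    Sum.elim (Sum.elim (fun _ => (1 : ℝ)) fun j => M r (Sum.inl j))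
      (fun j => M r (Sum.inr j)) c

/-- If the matrix `M` of points of `ℝⁿ` is in the block form with first row zero, the last
`m = n − k` columns zero in the first `k+1` rows, and (after row reduction) the first `k`
columns zero in the last `m` rows, then `|det[1|M]| = |det A|·|det B|` where `A` is the
`k × k` block in rows `2..k+1` and `B` the `m × m` block in the last rows.  In particular,
for a nondegenerate simplex whose complementary block `B` is `1 × 1` with entries in
`{0,1}`, the class of the exterior facet equals the class of the simplex. -/
theorem stmt6 (k m : ℕ) (M : Matrix ((Unit ⊕ Fin k) ⊕ Fin m) (Fin k ⊕ Fin m) ℝ)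
    (h0 : ∀ j, M (Sum.inl (Sum.inl ())) j = 0)
    (htr : ∀ (i : Unit ⊕ Fin k) (j : Fin m), M (Sum.inl i) (Sum.inr j) = 0)
    (hbl : ∀ (i : Fin m) (j : Fin k), M (Sum.inr i) (Sum.inl j) = 0)
    (A : Matrix (Fin k) (Fin k) ℝ) (hA : ∀ i j, A i j = M (Sum.inl (Sum.inr i)) (Sum.inl j))
    (B : Matrix (Fin m) (Fin m) ℝ) (hB : ∀ i j, B i j = M (Sum.inr i) (Sum.inr j)) :
    |(augMat k m M).det| = |A.det| * |B.det| ∧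
      ((augMat k m M).det ≠ 0 → (∀ i j, B i j = 0 ∨ B i j = 1) → m = 1 →
        |(augMat k m M).det| = |A.det|) := by
  have hblock : augMat k m M =
      Matrix.fromBlocks
        (Matrix.fromBlocks (1 : Matrix Unit Unit ℝ) 0 (Matrix.of fun _ _ => (1 : ℝ)) A)
        0 (Matrix.of fun i c => Sum.elim (fun _ => (1 : ℝ)) (fun j => (0 : ℝ)) c) B := by
    ext r c
    cases r with
    | inl r =>
      cases r with
      | inl r =>
        cases c with
        | inl c =>
          cases c with
          | inl c => simp [augMat, Matrix.fromBlocks]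
          | inr c => simp [augMat, Matrix.fromBlocks, h0]
        | inr c => simp [augMat, Matrix.fromBlocks, htr]
      | inr r =>
        cases c with
        | inl c =>
          cases c with
          | inl c => simp [augMat, Matrix.fromBlocks]
          | inr c => simp [augMat, Matrix.fromBlocks, hA]
        | inr c => simp [augMat, Matrix.fromBlocks, htr]
    | inr r =>
      cases c with
      | inl c =>
        cases c with
        | inl c => simp [augMat, Matrix.fromBlocks]
        | inr c => simp [augMat, Matrix.fromBlocks, hbl]
      | inr c => simp [augMat, Matrix.fromBlocks, hB]
  have hdet : (augMat k m M).det = A.det * B.det := by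
    rw [hblock, Matrix.det_fromBlocks_zero₁₂, Matrix.det_fromBlocks_zero₁₂]
    simp
  constructor
  · rw [hdet, abs_mul]
  · intro hne hBent hm
    subst hm
    have hBne : B.det ≠ 0 := fun h => hne (by rw [hdet, h, mul_zero])
    have : B.det = B 0 0 := by simp [Matrix.det_fin_one]
    have hB1 : B 0 0 = 1 := by
      rcases hBent 0 0 with h | h
      · exact absurd (this.trans h) hBne
      · exact h
    rw [hdet, abs_mul, this, hB1]
    simp
end

section
/- Let α be a nondegenerate (s+2t)-simplex with 0/1 vertices in Π*_{s,t}, let σ be an exterior face of α, and let π_σ be the linear projection sending the vertices of σ to the origin (zeroing out the free coordinates of σ in reduced coordinates with respect to a vertex of σ). Then π_σ is injective on the vertices of α not in σ. -/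
set_option maxHeartbeats 1000000 in
theorem aux8 (n : ℕ) (w : Fin (n+1) → (Fin n → ℝ)) (hindep : AffineIndependent ℝ w)
    (S : Finset (Fin (n+1))) (Z : Finset (Fin n)) (hcard : S.card + Z.card = n+1)
    (hzero : ∀ a ∈ S, ∀ z ∈ Z, w a z = 0)
    (a b : Fin (n+1)) (ha : a ∉ S) (hb : b ∉ S)
    (hab : ∀ z ∈ Z, w a z = w b z) : a = b := by
  classical
  by_contra hne
  have hne' : b ≠ a := fun h => hne h.symm
  have hZle : Z.card ≤ n := by
    have := Z.card_le_univ
    simpa using this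
  have hSpos : 0 < S.card := by omega
  obtain ⟨c, hc⟩ := Finset.card_pos.mp hSpos
  have hac : a ≠ c := fun h => ha (h ▸ hc)
  have hbc : b ≠ c := fun h => hb (h ▸ hc)
  -- the projection and its kernel
  set π : (Fin n → ℝ) →ₗ[ℝ] (↥Z → ℝ) := LinearMap.funLeft ℝ ℝ Subtype.val with hπ
  have hπsurj : Function.Surjective π :=
    LinearMap.funLeft_surjective_of_injective ℝ ℝ _ Subtype.val_injective
  set V : Submodule ℝ (Fin n → ℝ) := LinearMap.ker π with hV
  have hVmem : ∀ v, v ∈ V ↔ ∀ z ∈ Z, v z = 0 := by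
    intro v
    constructor
    · intro hv z hz
      have : π v = 0 := hv
      exact congrFun this ⟨z, hz⟩
    · intro hv
      show π v = 0
      funext z
      exact hv z z.2
  -- dimension of V
  have hfV : Module.finrank ℝ V = n - Z.card := by
    have h1 := LinearMap.finrank_range_add_finrank_ker π
    rw [LinearMap.range_eq_top.mpr hπsurj, finrank_top] at h1
    rw [hV]
    have h2 : Module.finrank ℝ (↥Z → ℝ) = Z.card := by
      simp [Module.finrank_pi]
    have h3 : Module.finrank ℝ (Fin n → ℝ) = n := by
      simp [Module.finrank_pi]
    omega
  -- the linearly independent family in V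
  have li0 := (affineIndependent_iff_linearIndependent_vsub ℝ w c).mp hindep
  simp only [vsub_eq_sub] at li0
  set ι := ↥(S.erase c)
  have hgmem : ∀ x : ι, (w x.1 - w c) ∈ V := by
    intro x
    rw [hVmem]
    intro z hz
    have hx : (x : Fin (n+1)) ∈ S := Finset.mem_of_mem_erase x.2
    simp [hzero _ hx z hz, hzero c hc z hz]
  set g : ι → V := fun x => ⟨w x.1 - w c, hgmem x⟩ with hg
  have emb_inj : Function.Injective
      (fun x : ι => (⟨x.1, Finset.ne_of_mem_erase x.2⟩ : {y : Fin (n+1) // y ≠ c})) := by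
    intro x y hxy
    simp only [Subtype.mk.injEq] at hxy
    exact Subtype.ext hxy
  have li1 : LinearIndependent ℝ (fun x : ι => w x.1 - w c) :=
    li0.comp _ emb_inj
  have gli : LinearIndependent ℝ g :=
    LinearIndependent.of_comp V.subtype (by exact li1)
  have hcardι : Fintype.card ι = Module.finrank ℝ V := by
    rw [hfV, Fintype.card_coe, Finset.card_erase_of_mem hc]
    omega
  have hspan : Submodule.span ℝ (Set.range g) = ⊤ :=
    gli.span_eq_top_of_card_eq_finrank' hcardι
  -- the vector w a - w b lies in V
  have hvV : (w a - w b) ∈ V := by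
    rw [hVmem]
    intro z hz
    simp [hab z hz]
  set m : V := ⟨w a - w b, hvV⟩ with hm
  have hmspan : m ∈ Submodule.span ℝ (Set.range g) := by rw [hspan]; trivial
  obtain ⟨f, hf⟩ := (Submodule.mem_span_range_iff_exists_fun ℝ).mp hmspan
  have hf' : ∑ i : ι, f i • (w i.1 - w c) = w a - w b := by
    have := congrArg (Subtype.val) hf
    rw [hm] at this
    simpa [hg] using this
  set lam : Fin (n+1) → ℝ := fun x =>
    if h : x ∈ S.erase c then f ⟨x, h⟩ else 0 with hlam
  have hlam_not : ∀ x, x ∉ S.erase c → lam x = 0 := by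
    intro x hx
    rw [hlam]
    exact dif_neg hx
  have hsum_lam : ∑ x ∈ S.erase c, lam x • (w x - w c) = w a - w b := by
    rw [← hf']
    rw [← Finset.sum_attach (S.erase c) (fun x => lam x • (w x - w c))]
    apply Finset.sum_congr rfl
    intro i _
    congr 1
    rw [hlam]
    simp only [i.2, dif_pos]
  -- derive the contradiction from linear independence
  set G : Fin (n+1) → ℝ := fun x => if x = a then 1 else if x = b then -1 else -lam x
    with hG
  have hsum0 : ∑ i : {y : Fin (n+1) // y ≠ c}, G i.1 • (w i.1 - w c) = 0 := by
    rw [← Finset.sum_subtype (Finset.univ.erase c)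
      (by intro x; simp [Finset.mem_erase]) (fun x => G x • (w x - w c))]
    have hsub : insert a (insert b (S.erase c)) ⊆ Finset.univ.erase c := by
      intro x hx
      simp only [Finset.mem_insert] at hx
      rcases hx with rfl | rfl | hx
      · simp [Finset.mem_erase, hac]
      · simp [Finset.mem_erase, hbc]
      · simp [Finset.mem_erase, Finset.ne_of_mem_erase hx]
    rw [← Finset.sum_subset hsub ?_]
    · have hanb : a ∉ insert b (S.erase c) := by
        simp only [Finset.mem_insert]
        push_neg
        exact ⟨hne, fun h => ha (Finset.mem_of_mem_erase h)⟩
      have hbnS : b ∉ S.erase c := fun h => hb (Finset.mem_of_mem_erase h)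
      rw [Finset.sum_insert hanb, Finset.sum_insert hbnS]
      have hGa : G a = 1 := by simp [hG]
      have hGb : G b = -1 := by simp [hG, hne']
      have hGS : ∀ x ∈ S.erase c, G x = -lam x := by
        intro x hx
        have hxS := Finset.mem_of_mem_erase hx
        have hxa : x ≠ a := fun h => ha (h ▸ hxS)
        have hxb : x ≠ b := fun h => hb (h ▸ hxS)
        simp [hG, hxa, hxb]
      rw [hGa, hGb]
      have hS : ∑ x ∈ S.erase c, G x • (w x - w c)
          = -(∑ x ∈ S.erase c, lam x • (w x - w c)) := by
        rw [← Finset.sum_neg_distrib]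
        apply Finset.sum_congr rfl
        intro x hx
        rw [hGS x hx, neg_smul]
      rw [hS, hsum_lam]
      simp only [one_smul, neg_one_smul]
      abel
    · intro x hx hxn
      simp only [Finset.mem_insert] at hxn
      push_neg at hxn
      obtain ⟨hxa, hxb, hxS⟩ := hxn
      simp [hG, hxa, hxb, hlam_not x hxS]
  have hfinal := Fintype.linearIndependent_iff.mp li0 (fun i => G i.1) ?_ ⟨a, hac⟩
  · simp [hG] at hfinal
  · simpa using hsum0

/-- Let `α` be a nondegenerate `(s+2t)`-simplex with 0/1 vertices `w` in (the reduced
coordinate representation of) `Π*_{s,t}`, and let `σ` be an exterior face of `α`, spanned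
by the vertices indexed by `S`, all of which lie in the face of the simplotope where the
coordinates outside `Z` vanish (so the free coordinates of `σ` are those outside `Z`).
The projection `π_σ` (which keeps the coordinates in `Z` and sends the free coordinates
of `σ` to zero) is injective on the vertices of `α` not in `σ`. -/
theorem stmt8 (s t : ℕ) (w : Fin (s + 2 * t + 1) → (Fin (s + 2 * t) → ℝ))
    (h01 : ∀ a j, w a j = 0 ∨ w a j = 1)
    (hindep : AffineIndependent ℝ w)
    (S : Finset (Fin (s + 2 * t + 1))) (Z : Finset (Fin (s + 2 * t)))
    (hcard : S.card + Z.card = s + 2 * t + 1)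
    (hzero : ∀ a ∈ S, ∀ z ∈ Z, w a z = 0) :
    ∀ a b : Fin (s + 2 * t + 1), a ∉ S → b ∉ S →
      (fun j => if j ∈ Z then w a j else (0 : ℝ)) =
        (fun j => if j ∈ Z then w b j else (0 : ℝ)) → a = b := by
  intro a b ha hb heq
  apply aux8 (s + 2 * t) w hindep S Z hcard hzero a b ha hb
  intro z hz
  have := congrFun heq z
  simpa [hz] using this
end

section
/- Let α be a nondegenerate simplex in Π*_{s,t}. No three distinct exterior faces of α of dimension ≥ 2 can be contained in three tri-positioned faces of the simplotope. -/
/-- A vertex of `Π*_{s,t}`, the product of `s` segments and `t` triangles, in standard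
coordinates: all coordinates 0 or 1, with the coordinates of each factor summing to 1. -/
def IsVertexST (s t : ℕ) (x : (Fin s × Fin 2) ⊕ (Fin t × Fin 3) → ℝ) : Prop :=
  (∀ z, x z = 0 ∨ x z = 1) ∧
    (∀ i : Fin s, x (Sum.inl (i, 0)) + x (Sum.inl (i, 1)) = 1) ∧
    (∀ i : Fin t, x (Sum.inr (i, 0)) + x (Sum.inr (i, 1)) + x (Sum.inr (i, 2)) = 1)

/-- Three faces of `Π*_{s,t}` (specified by their sets of zero coordinates `Z₁,Z₂,Z₃`) are
tri-positioned if they have the same zero coordinates except in one triangle factor, and in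
that triangle factor each face has exactly one zero coordinate, a different one for each. -/
def TriPositioned (s t : ℕ) (Z₁ Z₂ Z₃ : Finset ((Fin s × Fin 2) ⊕ (Fin t × Fin 3))) : Prop :=
  ∃ i : Fin t,
    (∀ z : Fin s × Fin 2,
      (Sum.inl z ∈ Z₁ ↔ Sum.inl z ∈ Z₂) ∧ (Sum.inl z ∈ Z₁ ↔ Sum.inl z ∈ Z₃)) ∧
    (∀ z : Fin t × Fin 3, z.1 ≠ i →
      (Sum.inr z ∈ Z₁ ↔ Sum.inr z ∈ Z₂) ∧ (Sum.inr z ∈ Z₁ ↔ Sum.inr z ∈ Z₃)) ∧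
    (∃ j₁ j₂ j₃ : Fin 3, j₁ ≠ j₂ ∧ j₁ ≠ j₃ ∧ j₂ ≠ j₃ ∧
      ∀ j : Fin 3, (Sum.inr (i, j) ∈ Z₁ ↔ j = j₁) ∧ (Sum.inr (i, j) ∈ Z₂ ↔ j = j₂) ∧
        (Sum.inr (i, j) ∈ Z₃ ↔ j = j₃))

/-- Let `α` be a nondegenerate simplex in `Π*_{s,t}`.  No three distinct exterior faces of
`α` of dimension ≥ 2 can be contained in three tri-positioned faces of the simplotope. -/
theorem stmt11 (s t : ℕ)
    (w : Fin (s + 2 * t + 1) → ((Fin s × Fin 2) ⊕ (Fin t × Fin 3) → ℝ))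
    (hv : ∀ a, IsVertexST s t (w a)) (hindep : AffineIndependent ℝ w)
    (S₁ S₂ S₃ : Finset (Fin (s + 2 * t + 1)))
    (Z₁ Z₂ Z₃ : Finset ((Fin s × Fin 2) ⊕ (Fin t × Fin 3)))
    (hc₁ : S₁.card + Z₁.card = s + 2 * t + 1)
    (hc₂ : S₂.card + Z₂.card = s + 2 * t + 1)
    (hc₃ : S₃.card + Z₃.card = s + 2 * t + 1)
    (hz₁ : ∀ a ∈ S₁, ∀ z ∈ Z₁, w a z = 0)
    (hz₂ : ∀ a ∈ S₂, ∀ z ∈ Z₂, w a z = 0)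
    (hz₃ : ∀ a ∈ S₃, ∀ z ∈ Z₃, w a z = 0)
    (hdim₁ : 3 ≤ S₁.card) (hdim₂ : 3 ≤ S₂.card) (hdim₃ : 3 ≤ S₃.card)
    (hne₁₂ : S₁ ≠ S₂) (hne₁₃ : S₁ ≠ S₃) (hne₂₃ : S₂ ≠ S₃)
    (htri : TriPositioned s t Z₁ Z₂ Z₃) : False := by
  classical
  obtain ⟨i, hseg, htr, j₁, j₂, j₃, hj12, hj13, hj23, hmem⟩ := htri
  -- every j : Fin 3 is one of j₁, j₂, j₃
  have hall : ∀ j : Fin 3, j = j₁ ∨ j = j₂ ∨ j = j₃ := by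
    intro j
    by_contra h
    push_neg at h
    obtain ⟨h1, h2, h3⟩ := h
    have e1 : j₁.val ≠ j₂.val := fun h => hj12 (Fin.ext h)
    have e2 : j₁.val ≠ j₃.val := fun h => hj13 (Fin.ext h)
    have e3 : j₂.val ≠ j₃.val := fun h => hj23 (Fin.ext h)
    have f1 : j.val ≠ j₁.val := fun h => h1 (Fin.ext h)
    have f2 : j.val ≠ j₂.val := fun h => h2 (Fin.ext h)
    have f3 : j.val ≠ j₃.val := fun h => h3 (Fin.ext h)
    have := j.isLt; have := j₁.isLt; have := j₂.isLt; have := j₃.isLt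
    omega
  -- triple intersection is empty
  have htriple : ∀ a, a ∈ S₁ → a ∈ S₂ → a ∈ S₃ → False := by
    intro a ha1 ha2 ha3
    have h0 : ∀ j : Fin 3, w a (Sum.inr (i, j)) = 0 := by
      intro j
      rcases hall j with h | h | h
      · exact hz₁ a ha1 _ (((hmem j).1).mpr h)
      · exact hz₂ a ha2 _ (((hmem j).2.1).mpr h)
      · exact hz₃ a ha3 _ (((hmem j).2.2).mpr h)
    have := (hv a).2.2 i
    rw [h0 0, h0 1, h0 2] at this
    norm_num at this
  -- the common zero set
  set Z₀ : Finset ((Fin s × Fin 2) ⊕ (Fin t × Fin 3)) := Z₁.erase (Sum.inr (i, j₁)) with hZ₀def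
  have hj1Z₁ : Sum.inr (i, j₁) ∈ Z₁ := ((hmem j₁).1).mpr rfl
  have hZ₀card : Z₀.card + 1 = Z₁.card := by
    rw [hZ₀def, Finset.card_erase_of_mem hj1Z₁]
    have : 1 ≤ Z₁.card := Finset.card_pos.mpr ⟨_, hj1Z₁⟩
    omega
  have hZ₀noi : ∀ j : Fin 3, Sum.inr (i, j) ∉ Z₀ := by
    intro j hj
    have h1 := Finset.mem_of_mem_erase hj
    have h2 := Finset.ne_of_mem_erase hj
    have := ((hmem j).1).mp h1
    exact h2 (by rw [this])
  have hZ₀1 : Z₀ ⊆ Z₁ := Finset.erase_subset _ _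
  have hZ₀2 : Z₀ ⊆ Z₂ := by
    intro z hz
    have hz1 := Finset.mem_of_mem_erase hz
    match z with
    | Sum.inl z' => exact ((hseg z').1).mp hz1
    | Sum.inr (i', j) =>
      by_cases hii : i' = i
      · subst hii; exact absurd hz (hZ₀noi j)
      · exact ((htr (i', j) hii).1).mp hz1
  have hZ₀3 : Z₀ ⊆ Z₃ := by
    intro z hz
    have hz1 := Finset.mem_of_mem_erase hz
    match z with
    | Sum.inl z' => exact ((hseg z').2).mp hz1
    | Sum.inr (i', j) =>
      by_cases hii : i' = i
      · subst hii; exact absurd hz (hZ₀noi j)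
      · exact ((htr (i', j) hii).2).mp hz1
  -- Z₂ and Z₃ have the same card as Z₁
  have hZ₂eq : Z₂ = insert (Sum.inr (i, j₂)) Z₀ := by
    ext z
    constructor
    · intro hz
      match z with
      | Sum.inl z' =>
        refine Finset.mem_insert_of_mem (Finset.mem_erase.mpr ⟨by simp, ((hseg z').1).mpr hz⟩)
      | Sum.inr (i', j) =>
        by_cases hii : i' = i
        · subst hii
          have := ((hmem j).2.1).mp hz
          subst this; exact Finset.mem_insert_self _ _
        · refine Finset.mem_insert_of_mem (Finset.mem_erase.mpr ⟨?_, ((htr (i', j) hii).1).mpr hz⟩)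
          simp only [ne_eq, Sum.inr.injEq, Prod.mk.injEq, not_and]
          intro h; exact absurd h hii
    · intro hz
      rcases Finset.mem_insert.mp hz with h | h
      · subst h; exact ((hmem j₂).2.1).mpr rfl
      · exact hZ₀2 h
  have hZ₃eq : Z₃ = insert (Sum.inr (i, j₃)) Z₀ := by
    ext z
    constructor
    · intro hz
      match z with
      | Sum.inl z' =>
        refine Finset.mem_insert_of_mem (Finset.mem_erase.mpr ⟨by simp, ((hseg z').2).mpr hz⟩)
      | Sum.inr (i', j) =>
        by_cases hii : i' = i
        · subst hii
          have := ((hmem j).2.2).mp hz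
          subst this; exact Finset.mem_insert_self _ _
        · refine Finset.mem_insert_of_mem (Finset.mem_erase.mpr ⟨?_, ((htr (i', j) hii).2).mpr hz⟩)
          simp only [ne_eq, Sum.inr.injEq, Prod.mk.injEq, not_and]
          intro h; exact absurd h hii
    · intro hz
      rcases Finset.mem_insert.mp hz with h | h
      · subst h; exact ((hmem j₃).2.2).mpr rfl
      · exact hZ₀3 h
  have hZ₂card : Z₂.card = Z₀.card + 1 := by
    rw [hZ₂eq, Finset.card_insert_of_notMem (hZ₀noi j₂)]
  have hZ₃card : Z₃.card = Z₀.card + 1 := by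
    rw [hZ₃eq, Finset.card_insert_of_notMem (hZ₀noi j₃)]
  -- a reference vertex in S₁
  have hS₁ne : S₁.Nonempty := Finset.card_pos.mp (by omega)
  obtain ⟨a₁, ha₁⟩ := hS₁ne
  -- Z₀ does not contain a full factor
  have hsegfree : ∀ i' : Fin s, ¬(Sum.inl (i', 0) ∈ Z₀ ∧ Sum.inl (i', 1) ∈ Z₀) := by
    rintro i' ⟨h0, h1⟩
    have e0 := hz₁ a₁ ha₁ _ (hZ₀1 h0)
    have e1 := hz₁ a₁ ha₁ _ (hZ₀1 h1)
    have := (hv a₁).2.1 i'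
    rw [e0, e1] at this; norm_num at this
  have htrifree : ∀ i' : Fin t,
      ¬(Sum.inr (i', 0) ∈ Z₀ ∧ Sum.inr (i', 1) ∈ Z₀ ∧ Sum.inr (i', 2) ∈ Z₀) := by
    rintro i' ⟨h0, h1, h2⟩
    have e0 := hz₁ a₁ ha₁ _ (hZ₀1 h0)
    have e1 := hz₁ a₁ ha₁ _ (hZ₀1 h1)
    have e2 := hz₁ a₁ ha₁ _ (hZ₀1 h2)
    have := (hv a₁).2.2 i'
    rw [e0, e1, e2] at this; norm_num at this
  -- chosen free coordinate for each factor
  set cseg : Fin s → Fin 2 := fun i' => if Sum.inl (i', 0) ∈ Z₀ then 1 else 0 with hcseg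
  set ctri : Fin t → Fin 3 :=
    fun i' => if Sum.inr (i', 0) ∉ Z₀ then 0 else if Sum.inr (i', 1) ∉ Z₀ then 1 else 2
    with hctri
  set chosen : ((Fin s × Fin 2) ⊕ (Fin t × Fin 3)) → ((Fin s × Fin 2) ⊕ (Fin t × Fin 3)) := fun z =>
    match z with
    | Sum.inl (i', _) => Sum.inl (i', cseg i')
    | Sum.inr (i', _) => Sum.inr (i', ctri i') with hchosen
  have hchinl : ∀ (i' : Fin s) (j : Fin 2),
      chosen (Sum.inl (i', j)) = Sum.inl (i', cseg i') := fun _ _ => rfl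
  have hchinr : ∀ (i' : Fin t) (j : Fin 3),
      chosen (Sum.inr (i', j)) = Sum.inr (i', ctri i') := fun _ _ => rfl
  have hcsegfree : ∀ i' : Fin s,
      (Sum.inl (i', cseg i') : (Fin s × Fin 2) ⊕ (Fin t × Fin 3)) ∉ Z₀ := by
    intro i'
    simp only [hcseg]
    split_ifs with h
    · intro h1; exact hsegfree i' ⟨h, h1⟩
    · exact h
  have hctrifree : ∀ i' : Fin t,
      (Sum.inr (i', ctri i') : (Fin s × Fin 2) ⊕ (Fin t × Fin 3)) ∉ Z₀ := by
    intro i'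
    simp only [hctri]
    by_cases h0 : Sum.inr (i', (0 : Fin 3)) ∈ Z₀
    · rw [if_neg (not_not.mpr h0)]
      by_cases h1 : Sum.inr (i', (1 : Fin 3)) ∈ Z₀
      · rw [if_neg (not_not.mpr h1)]
        intro h2; exact htrifree i' ⟨h0, h1, h2⟩
      · rw [if_pos h1]; exact h1
    · rw [if_pos h0]; exact h0
  have hchfree : ∀ z, chosen z ∉ Z₀ := by
    rintro (⟨i', j⟩ | ⟨i', j⟩)
    · rw [hchinl i' j]; exact hcsegfree i'
    · rw [hchinr i' j]; exact hctrifree i'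
  have hchch : ∀ z, chosen (chosen z) = chosen z := by
    rintro (⟨i', j⟩ | ⟨i', j⟩)
    · exact hchinl i' (cseg i')
    · exact hchinr i' (ctri i')
  -- the free coordinates B
  set B : Finset ((Fin s × Fin 2) ⊕ (Fin t × Fin 3)) := Finset.univ.filter (fun z => z ∉ Z₀ ∧ chosen z ≠ z) with hBdef
  have hBmem : ∀ z : ((Fin s × Fin 2) ⊕ (Fin t × Fin 3)), z ∈ B ↔ z ∉ Z₀ ∧ chosen z ≠ z := by
    intro z; simp [hBdef]
  -- the key vanishing lemma
  have hvanish : ∀ v : ((Fin s × Fin 2) ⊕ (Fin t × Fin 3)) → ℝ, (∀ z ∈ Z₀, v z = 0) →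
      (∀ i' : Fin s, v (Sum.inl (i', 0)) + v (Sum.inl (i', 1)) = 0) →
      (∀ i' : Fin t, v (Sum.inr (i', 0)) + v (Sum.inr (i', 1)) + v (Sum.inr (i', 2)) = 0) →
      (∀ z ∈ B, v z = 0) → v = 0 := by
    intro v h0 hs ht hB
    have hother : ∀ z : ((Fin s × Fin 2) ⊕ (Fin t × Fin 3)), chosen z ≠ z → v z = 0 := by
      intro z hz
      by_cases h : z ∈ Z₀
      · exact h0 z h
      · exact hB z ((hBmem z).mpr ⟨h, hz⟩)
    funext z
    show v z = 0
    by_cases hcz : chosen z = z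
    · match z, hcz with
      | Sum.inl (i', j), hcz =>
        have hj : j = cseg i' := by
          rw [hchinl i' j] at hcz
          simpa using congrArg (fun x => Sum.elim (fun p : Fin s × Fin 2 => p.2) (fun _ => 0) x) hcz.symm
        have hsum := hs i'
        have hone : ∀ j' : Fin 2, j' ≠ cseg i' → v (Sum.inl (i', j')) = 0 := by
          intro j' hj'
          refine hother _ ?_
          rw [hchinl i' j']
          simp only [ne_eq, Sum.inl.injEq, Prod.mk.injEq, true_and]
          exact fun h => hj' h.symm
        rcases (by decide : ∀ c : Fin 2, c = 0 ∨ c = 1) (cseg i') with hc | hc <;>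
          rw [hj, hc] <;> rw [hc] at hone
        · have h1 := hone 1 (by decide); linarith
        · have h1 := hone 0 (by decide); linarith
      | Sum.inr (i', j), hcz =>
        have hj : j = ctri i' := by
          rw [hchinr i' j] at hcz
          simpa using congrArg (fun x => Sum.elim (fun _ => 0) (fun p : Fin t × Fin 3 => p.2) x) hcz.symm
        have hsum := ht i'
        have hone : ∀ j' : Fin 3, j' ≠ ctri i' → v (Sum.inr (i', j')) = 0 := by
          intro j' hj'
          refine hother _ ?_
          rw [hchinr i' j']
          simp only [ne_eq, Sum.inr.injEq, Prod.mk.injEq, true_and]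
          exact fun h => hj' h.symm
        rcases (by decide : ∀ c : Fin 3, c = 0 ∨ c = 1 ∨ c = 2) (ctri i') with hc | hc | hc <;>
          rw [hj, hc] <;> rw [hc] at hone
        · have h1 := hone 1 (by decide); have h2 := hone 2 (by decide); linarith
        · have h1 := hone 0 (by decide); have h2 := hone 2 (by decide); linarith
        · have h1 := hone 0 (by decide); have h2 := hone 1 (by decide); linarith
    · exact hother z hcz
  -- counting : univ = Z₀ ∪ C ∪ B
  set C : Finset ((Fin s × Fin 2) ⊕ (Fin t × Fin 3)) := Finset.univ.image chosen with hCdef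
  have hCmem : ∀ z : ((Fin s × Fin 2) ⊕ (Fin t × Fin 3)), z ∈ C ↔ chosen z = z := by
    intro z
    simp only [hCdef, Finset.mem_image, Finset.mem_univ, true_and]
    constructor
    · rintro ⟨y, rfl⟩; exact hchch y
    · intro h; exact ⟨z, h⟩
  have hCcard : C.card = s + t := by
    have hCeq : C = (Finset.univ.image fun i' : Fin s =>
          (Sum.inl (i', cseg i') : (Fin s × Fin 2) ⊕ (Fin t × Fin 3))) ∪
        (Finset.univ.image fun i' : Fin t =>
          (Sum.inr (i', ctri i') : (Fin s × Fin 2) ⊕ (Fin t × Fin 3))) := by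
      ext z
      simp only [hCdef, Finset.mem_image, Finset.mem_union, Finset.mem_univ, true_and]
      constructor
      · rintro ⟨y, rfl⟩
        match y with
        | Sum.inl (i', j) => exact Or.inl ⟨i', (hchinl i' j).symm⟩
        | Sum.inr (i', j) => exact Or.inr ⟨i', (hchinr i' j).symm⟩
      · rintro (⟨i', rfl⟩ | ⟨i', rfl⟩)
        · exact ⟨Sum.inl (i', cseg i'), hchinl i' (cseg i')⟩
        · exact ⟨Sum.inr (i', ctri i'), hchinr i' (ctri i')⟩
    have hinj1 : Function.Injective fun i' : Fin s =>
        (Sum.inl (i', cseg i') : (Fin s × Fin 2) ⊕ (Fin t × Fin 3)) := by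
      intro a b hab
      simp only [Sum.inl.injEq, Prod.mk.injEq] at hab
      exact hab.1
    have hinj2 : Function.Injective fun i' : Fin t =>
        (Sum.inr (i', ctri i') : (Fin s × Fin 2) ⊕ (Fin t × Fin 3)) := by
      intro a b hab
      simp only [Sum.inr.injEq, Prod.mk.injEq] at hab
      exact hab.1
    have hdisj : Disjoint (Finset.univ.image fun i' : Fin s =>
          (Sum.inl (i', cseg i') : (Fin s × Fin 2) ⊕ (Fin t × Fin 3)))
        (Finset.univ.image fun i' : Fin t =>
          (Sum.inr (i', ctri i') : (Fin s × Fin 2) ⊕ (Fin t × Fin 3))) := by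
      rw [Finset.disjoint_left]
      rintro z hz1 hz2
      simp only [Finset.mem_image, Finset.mem_univ, true_and] at hz1 hz2
      obtain ⟨x, hx⟩ := hz1
      obtain ⟨y, hy⟩ := hz2
      rw [← hx] at hy
      simp at hy
    rw [hCeq, Finset.card_union_of_disjoint hdisj,
      Finset.card_image_of_injective _ hinj1, Finset.card_image_of_injective _ hinj2]
    simp
  have hdisjZC : Disjoint Z₀ C := by
    rw [Finset.disjoint_right]
    intro z hz
    rw [hCmem] at hz
    rw [← hz]; exact hchfree z
  have hdisjZB : Disjoint Z₀ B := by
    rw [Finset.disjoint_right]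
    intro z hz
    exact ((hBmem z).mp hz).1
  have hdisjCB : Disjoint C B := by
    rw [Finset.disjoint_right]
    intro z hz
    rw [hCmem]
    exact ((hBmem z).mp hz).2
  have hcover : (Z₀ ∪ C) ∪ B = Finset.univ := by
    apply Finset.eq_univ_of_forall
    intro z
    by_cases h1 : z ∈ Z₀
    · exact Finset.mem_union_left _ (Finset.mem_union_left _ h1)
    by_cases h2 : chosen z = z
    · exact Finset.mem_union_left _ (Finset.mem_union_right _ ((hCmem z).mpr h2))
    · exact Finset.mem_union_right _ ((hBmem z).mpr ⟨h1, h2⟩)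
  have hKcard : (Finset.univ : Finset ((Fin s × Fin 2) ⊕ (Fin t × Fin 3))).card = 2 * s + 3 * t := by
    simp [Fintype.card_sum, Fintype.card_prod]; ring
  have hcount : 2 * s + 3 * t = Z₀.card + C.card + B.card := by
    rw [← hKcard, ← hcover, Finset.card_union_of_disjoint, Finset.card_union_of_disjoint hdisjZC]
    rw [Finset.disjoint_union_left]
    exact ⟨hdisjZB, hdisjCB⟩
  -- the union of the three faces
  set U : Finset (Fin (s + 2 * t + 1)) := (S₁ ∪ S₂) ∪ S₃ with hUdef
  have hUzero : ∀ a ∈ U, ∀ z ∈ Z₀, w a z = 0 := by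
    intro a ha z hz
    rcases Finset.mem_union.mp ha with h | h
    · rcases Finset.mem_union.mp h with h | h
      · exact hz₁ a h z (hZ₀1 hz)
      · exact hz₂ a h z (hZ₀2 hz)
    · exact hz₃ a h z (hZ₀3 hz)
  have hUne : U.Nonempty := ⟨a₁, Finset.mem_union_left _ (Finset.mem_union_left _ ha₁)⟩
  obtain ⟨a₀, ha₀⟩ := hUne
  -- restriction linear map
  set φ : (((Fin s × Fin 2) ⊕ (Fin t × Fin 3)) → ℝ) →ₗ[ℝ] (↥B → ℝ) := LinearMap.funLeft ℝ ℝ (Subtype.val : ↥B → ((Fin s × Fin 2) ⊕ (Fin t × Fin 3))) with hφ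
  -- linear independence of differences
  have hli0 : LinearIndependent ℝ fun a : {x : Fin (s + 2 * t + 1) // x ≠ a₀} =>
      w a - w a₀ := by
    have h := (affineIndependent_iff_linearIndependent_vsub ℝ w a₀).mp hindep
    have he : (fun a : {x : Fin (s + 2 * t + 1) // x ≠ a₀} => w ↑a -ᵥ w a₀) =
        fun a : {x : Fin (s + 2 * t + 1) // x ≠ a₀} => w ↑a - w a₀ :=
      funext fun a => vsub_eq_sub _ _
    rwa [he] at h
  set emb : {a : Fin (s + 2 * t + 1) // a ∈ U.erase a₀} →
      {x : Fin (s + 2 * t + 1) // x ≠ a₀} :=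
    fun a => ⟨a.1, (Finset.mem_erase.mp a.2).1⟩ with hemb
  set g : {a : Fin (s + 2 * t + 1) // a ∈ U.erase a₀} →
      (((Fin s × Fin 2) ⊕ (Fin t × Fin 3)) → ℝ) :=
    (fun a : {x : Fin (s + 2 * t + 1) // x ≠ a₀} => w ↑a - w a₀) ∘ emb with hg
  have hgapp : ∀ a, g a = w a.1 - w a₀ := fun a => rfl
  have hli1 : LinearIndependent ℝ g := by
    refine hli0.comp emb ?_
    intro a b hab
    rw [hemb] at hab
    simp only [Subtype.mk.injEq] at hab
    exact Subtype.ext hab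
  have hginU : ∀ a : {a : Fin (s + 2 * t + 1) // a ∈ U.erase a₀},
      (∀ z ∈ Z₀, g a z = 0) ∧
      (∀ i' : Fin s, g a (Sum.inl (i', 0)) + g a (Sum.inl (i', 1)) = 0) ∧
      (∀ i' : Fin t,
        g a (Sum.inr (i', 0)) + g a (Sum.inr (i', 1)) + g a (Sum.inr (i', 2)) = 0) := by
    intro a
    have haU : a.1 ∈ U := Finset.mem_of_mem_erase a.2
    refine ⟨?_, ?_, ?_⟩
    · intro z hz
      rw [hgapp a]
      simp only [Pi.sub_apply]
      rw [hUzero a.1 haU z hz, hUzero a₀ ha₀ z hz]; ring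
    · intro i'
      rw [hgapp a]
      simp only [Pi.sub_apply]
      have h1 := (hv a.1).2.1 i'
      have h2 := (hv a₀).2.1 i'
      linarith
    · intro i'
      rw [hgapp a]
      simp only [Pi.sub_apply]
      have h1 := (hv a.1).2.2 i'
      have h2 := (hv a₀).2.2 i'
      linarith
  have hli2 : LinearIndependent ℝ (⇑φ ∘ g) := by
    apply hli1.map
    -- Disjoint (span (range g)) (ker φ)
    rw [Submodule.disjoint_def]
    intro x hx hker
    -- x satisfies the linear conditions
    set W : Submodule ℝ (((Fin s × Fin 2) ⊕ (Fin t × Fin 3)) → ℝ) :=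
      { carrier := {v | (∀ z ∈ Z₀, v z = 0) ∧
          (∀ i' : Fin s, v (Sum.inl (i', 0)) + v (Sum.inl (i', 1)) = 0) ∧
          (∀ i' : Fin t,
            v (Sum.inr (i', 0)) + v (Sum.inr (i', 1)) + v (Sum.inr (i', 2)) = 0)}
        add_mem' := by
          rintro a b ⟨ha1, ha2, ha3⟩ ⟨hb1, hb2, hb3⟩
          refine ⟨?_, ?_, ?_⟩
          · intro z hz; simp [ha1 z hz, hb1 z hz]
          · intro i'; have := ha2 i'; have := hb2 i'; simp only [Pi.add_apply]; linarith
          · intro i'; have := ha3 i'; have := hb3 i'; simp only [Pi.add_apply]; linarith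
        zero_mem' := by
          refine ⟨fun z _ => rfl, fun i' => by simp, fun i' => by simp⟩
        smul_mem' := by
          rintro c a ⟨ha1, ha2, ha3⟩
          refine ⟨?_, ?_, ?_⟩
          · intro z hz; simp [ha1 z hz]
          · intro i'
            simp only [Pi.smul_apply, smul_eq_mul]
            rw [← mul_add, ha2 i', mul_zero]
          · intro i'
            simp only [Pi.smul_apply, smul_eq_mul]
            rw [← mul_add, ← mul_add, ha3 i', mul_zero]
        } with hW
    have hxW : x ∈ W := by
      have hle : Submodule.span ℝ (Set.range g) ≤ W := by
        rw [Submodule.span_le]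
        rintro v ⟨a, rfl⟩
        exact hginU a
      exact hle hx
    obtain ⟨hx1, hx2, hx3⟩ := hxW
    have hxB : ∀ z ∈ B, x z = 0 := by
      intro z hz
      have : φ x = 0 := LinearMap.mem_ker.mp hker
      have := congrFun this ⟨z, hz⟩
      simpa [hφ, LinearMap.funLeft] using this
    exact hvanish x hx1 hx2 hx3 hxB
  -- cardinality bound
  have hcard1 : (U.erase a₀).card ≤ B.card := by
    have h1 : Fintype.card {a : Fin (s + 2 * t + 1) // a ∈ U.erase a₀} ≤
        Module.finrank ℝ (↥B → ℝ) := hli2.fintype_card_le_finrank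
    rw [Module.finrank_fintype_fun_eq_card] at h1
    simp only [Fintype.card_coe] at h1
    exact h1
  have hUcard : U.card ≤ B.card + 1 := by
    have := Finset.card_erase_of_mem ha₀
    have hpos : 1 ≤ U.card := Finset.card_pos.mpr ⟨a₀, ha₀⟩
    omega
  -- inclusion-exclusion counting
  have e1 : (S₁ ∪ S₂).card + (S₁ ∩ S₂).card = S₁.card + S₂.card :=
    Finset.card_union_add_card_inter S₁ S₂
  have e2 : U.card + ((S₁ ∪ S₂) ∩ S₃).card = (S₁ ∪ S₂).card + S₃.card :=
    Finset.card_union_add_card_inter (S₁ ∪ S₂) S₃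
  have e3 : (S₁ ∩ S₂).card + ((S₁ ∪ S₂) ∩ S₃).card ≤ U.card := by
    rw [← Finset.card_union_of_disjoint]
    · apply Finset.card_le_card
      intro a ha
      rcases Finset.mem_union.mp ha with h | h
      · exact Finset.mem_union_left _ (Finset.mem_union_left _ (Finset.mem_inter.mp h).1)
      · exact Finset.mem_union_right _ (Finset.mem_inter.mp h).2
    · rw [Finset.disjoint_left]
      intro a ha hb
      obtain ⟨h1, h2⟩ := Finset.mem_inter.mp ha
      obtain ⟨_, h3⟩ := Finset.mem_inter.mp hb
      exact htriple a h1 h2 h3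
  omega
end

section
/- If σ and τ are exterior faces of a nondegenerate simplex α in a simplotope, then σ ∩ τ is also an exterior face of α (or empty). Precisely, if α has dimension N, σ has dimension n with N−n common zero coordinates, τ has dimension m with N−m common zero coordinates, and σ ∩ τ has dimension p, then σ and τ share exactly N−m−n+p common zero coordinates, so σ ∩ τ lies in a p-face of the simplotope. -/
/-!
Let `N = ∑ cᵢ` and let `Z(U)` be the coordinates on which all vertices `w a`, `a ∈ U`, vanish.
The key bound is `|Z(U)| + |U| ≤ N + 1` for nonempty `U`: the affine hull of `{w a | a ∈ U}`
has dimension `|U| − 1`, and its direction consists of vectors vanishing on `Z(U)` with zero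
sum in every factor. A vertex `w a₀` has a nonzero entry in each of the `n` factors, outside
`Z(U)`, and such vectors are determined by their coordinates off `Z(U)` and these `n` entries,
leaving at most `(N + n) − |Z(U)| − n` free coordinates.

Now `Z(S ∪ T) = Z(S) ∩ Z(T)` and `Z(S) ∪ Z(T) ⊆ Z(S ∩ T)`, so inclusion–exclusion, the
hypotheses on `S`, `T` and the key bound for `S ∩ T` give `|Z(S ∪ T)| ≥ N + 1 − |S ∪ T|`;
the key bound for `S ∪ T` is the reverse inequality.
-/

/-- A vertex of the simplotope `Π(c 1, …, c n)` in standard coordinates. -/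
def IsSimplotopeVertex {n : ℕ} (c : Fin n → ℕ)
    (x : (Σ i : Fin n, Fin (c i + 1)) → ℝ) : Prop :=
  (∀ z, x z = 0 ∨ x z = 1) ∧ ∀ i : Fin n, ∑ j : Fin (c i + 1), x ⟨i, j⟩ = 1

/-- The set of zero coordinates common to the vertices of `α` indexed by `U`. -/
def zeroCols {n : ℕ} (c : Fin n → ℕ) {N : ℕ}
    (w : Fin N → ((Σ i : Fin n, Fin (c i + 1)) → ℝ))
    (U : Finset (Fin N)) : Set (Σ i : Fin n, Fin (c i + 1)) :=
  {z | ∀ a ∈ U, w a z = 0}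

open Finset Module

section FiberSums

variable {ρ : Type*} {κ : ρ → Type*} [∀ i, Fintype (κ i)]

theorem eq_zero_of_fiber_sums_eq_zero {M : Type*} [AddCommMonoid M] {x : (Σ i, κ i) → M}
    (p : ∀ i, κ i) (hsum : ∀ i, ∑ j, x ⟨i, j⟩ = 0) (hoff : ∀ i j, j ≠ p i → x ⟨i, j⟩ = 0) :
    x = 0 := by
  classical
  funext ⟨i, j⟩
  by_cases hj : j = p i
  · subst hj
    rw [Pi.zero_apply, ← hsum i, sum_eq_single (p i) (fun j _ hj => hoff i j hj) (by simp)]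
  · exact hoff i j hj

variable (𝕜 : Type*) [Field 𝕜]

/-- The direction of the affine hull of the face of the simplotope `∏ᵢ Δ(κ i)` on which the
coordinates in `Z` vanish. -/
def faceDirection (Z : Finset (Σ i, κ i)) : Submodule 𝕜 ((Σ i, κ i) → 𝕜) where
  carrier := {x | (∀ z ∈ Z, x z = 0) ∧ ∀ i, ∑ j, x ⟨i, j⟩ = 0}
  add_mem' := by
    rintro x y ⟨hx, hx'⟩ ⟨hy, hy'⟩
    exact ⟨fun z hz => by simp [hx z hz, hy z hz], fun i => by simp [sum_add_distrib, hx' i, hy' i]⟩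
  zero_mem' := ⟨fun _ _ => rfl, fun _ => by simp⟩
  smul_mem' := by
    rintro r x ⟨hx, hx'⟩
    exact ⟨fun z hz => by simp [hx z hz], fun i => by simp [← mul_sum, hx' i]⟩

theorem finrank_faceDirection_add_card_le [Fintype ρ] {Z : Finset (Σ i, κ i)} (p : ∀ i, κ i)
    (hp : ∀ i, ⟨i, p i⟩ ∉ Z) :
    finrank 𝕜 (faceDirection 𝕜 Z) + #Z + Fintype.card ρ ≤ Fintype.card (Σ i, κ i) := by
  classical
  set P : Finset (Σ i, κ i) := univ.image fun i => ⟨i, p i⟩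
  have hP : #P = Fintype.card ρ := card_image_of_injective _ fun i i' h => congrArg Sigma.fst h
  have hZP : Disjoint Z P := by
    simp only [P, disjoint_left, mem_image, mem_univ, true_and, not_exists]
    exact fun z hz i hi => hp i (hi ▸ hz)
  -- A vector of the face direction is determined by its coordinates off `Z` and the section `p`.
  set φ := (LinearMap.funLeft 𝕜 𝕜 (Subtype.val : ↥(Z ∪ P)ᶜ → Σ i, κ i)).comp
    (faceDirection 𝕜 Z).subtype
  have hφ : Function.Injective φ := by
    rw [← LinearMap.ker_eq_bot, Submodule.eq_bot_iff]
    rintro ⟨x, hxZ, hxsum⟩ hx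
    refine Subtype.ext (eq_zero_of_fiber_sums_eq_zero p hxsum fun i j hj => ?_)
    by_cases hZ : ⟨i, j⟩ ∈ Z
    · exact hxZ _ hZ
    · refine congrFun (LinearMap.mem_ker.mp hx) ⟨⟨i, j⟩, ?_⟩
      simp only [P, mem_compl, mem_union, mem_image, mem_univ, true_and, not_or, hZ,
        not_false_eq_true]
      exact fun ⟨i', h⟩ => hj (by cases h; rfl)
  have := LinearMap.finrank_le_finrank_of_injective hφ
  rw [Module.finrank_fintype_fun_eq_card, Fintype.card_coe, card_compl,
    card_union_of_disjoint hZP, hP] at this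
  have := card_le_univ (Z ∪ P)
  rw [card_union_of_disjoint hZP, hP] at this
  omega

theorem vectorSpan_le_faceDirection {Z : Finset (Σ i, κ i)} {s : Set ((Σ i, κ i) → 𝕜)}
    (hZ : ∀ x ∈ s, ∀ z ∈ Z, x z = 0) (hsum : ∀ x ∈ s, ∀ i, ∑ j, x ⟨i, j⟩ = 1) :
    vectorSpan 𝕜 s ≤ faceDirection 𝕜 Z := by
  rw [vectorSpan_def, Submodule.span_le]
  rintro _ ⟨x, hx, y, hy, rfl⟩
  exact ⟨fun z hz => by simp [hZ x hx z hz, hZ y hy z hz],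
    fun i => by simp [sum_sub_distrib, hsum x hx i, hsum y hy i]⟩

end FiberSums

section Simplotope

variable {n : ℕ} {c : Fin n → ℕ}

theorem zeroCols_anti {M : ℕ} (w : Fin M → (Σ i : Fin n, Fin (c i + 1)) → ℝ)
    {U V : Finset (Fin M)} (h : U ⊆ V) : zeroCols c w V ⊆ zeroCols c w U :=
  fun _ hz a ha => hz a (h ha)

theorem zeroCols_union {M : ℕ} (w : Fin M → (Σ i : Fin n, Fin (c i + 1)) → ℝ)
    (U V : Finset (Fin M)) : zeroCols c w (U ∪ V) = zeroCols c w U ∩ zeroCols c w V := by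
  ext z
  simp only [zeroCols, Set.mem_ofPred_eq, Set.mem_inter_iff, mem_union, or_imp, forall_and]

theorem ncard_zeroCols_add_card_le {M : ℕ} {w : Fin M → (Σ i : Fin n, Fin (c i + 1)) → ℝ}
    (hv : ∀ a, IsSimplotopeVertex c (w a)) (hw : AffineIndependent ℝ w)
    {U : Finset (Fin M)} (hU : U.Nonempty) :
    (zeroCols c w U).ncard + #U ≤ (∑ i, c i) + 1 := by
  classical
  obtain ⟨a₀, ha₀⟩ := hU
  set Z := (zeroCols c w U).toFinset
  have hpivot : ∀ i, ∃ j, w a₀ ⟨i, j⟩ ≠ 0 := fun i => by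
    by_contra! h
    simpa [h] using (hv a₀).2 i
  choose p hp using hpivot
  have hpZ : ∀ i, ⟨i, p i⟩ ∉ Z := fun i hi =>
    hp i ((Set.mem_toFinset.mp hi) a₀ ha₀)
  have hspan : vectorSpan ℝ (↑(U.image w) : Set (_ → ℝ)) ≤ faceDirection ℝ Z := by
    refine vectorSpan_le_faceDirection ℝ (fun x hx z hz => ?_) fun x hx i => ?_ <;>
      obtain ⟨a, ha, rfl⟩ := mem_image.mp hx
    exacts [Set.mem_toFinset.mp hz a ha, (hv a).2 i]
  have hrank := hw.finrank_vectorSpan_image_finset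
    (Nat.sub_one_add_one_eq_of_pos (card_pos.mpr ⟨a₀, ha₀⟩)).symm
  have hcard : Fintype.card (Σ i : Fin n, Fin (c i + 1)) = (∑ i, c i) + n := by
    simp [Fintype.card_sigma, sum_add_distrib]
  have hface := finrank_faceDirection_add_card_le ℝ p hpZ
  rw [hcard, Fintype.card_fin] at hface
  rw [Set.ncard_eq_toFinset_card']
  change #Z + #U ≤ _
  have := Submodule.finrank_mono hspan
  omega

end Simplotope

/-- If `σ` and `τ` are exterior faces of a nondegenerate maximal simplex `α` (vertices `w`)
in a simplotope of dimension `N = ∑ cᵢ`, where `σ` has dimension `n' = |S| − 1` with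
exactly `N − n'` common zero coordinates and `τ` has dimension `m = |T| − 1` with exactly
`N − m` common zero coordinates, and `σ ∩ τ` is nonempty of dimension `p = |S ∩ T| − 1`,
then `σ` and `τ` share exactly `N − m − n' + p` common zero coordinates; hence `σ ∩ τ` lies
in a common `p`-face of the simplotope and is an exterior face of `α`. -/
theorem stmt12 {n : ℕ} (c : Fin n → ℕ)
    (w : Fin ((∑ i, c i) + 1) → ((Σ i : Fin n, Fin (c i + 1)) → ℝ))
    (hv : ∀ a, IsSimplotopeVertex c (w a)) (hindep : AffineIndependent ℝ w)
    (S T : Finset (Fin ((∑ i, c i) + 1)))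
    (hS : (zeroCols c w S).ncard + (S.card - 1) = ∑ i, c i)
    (hT : (zeroCols c w T).ncard + (T.card - 1) = ∑ i, c i)
    (hST : (S ∩ T).Nonempty) :
    (zeroCols c w (S ∪ T)).ncard + S.card + T.card = (∑ i, c i) + (S ∩ T).card + 1 := by
  have hSne : 0 < #S := card_pos.mpr (hST.mono inter_subset_left)
  have hTne : 0 < #T := card_pos.mpr (hST.mono inter_subset_right)
  have hinter := ncard_zeroCols_add_card_le hv hindep hST
  have hunion := ncard_zeroCols_add_card_le hv hindep (hST.mono inter_subset_union)
  have hsub : (zeroCols c w S ∪ zeroCols c w T).ncard ≤ (zeroCols c w (S ∩ T)).ncard :=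
    Set.ncard_le_ncard (Set.union_subset (zeroCols_anti w inter_subset_left)
      (zeroCols_anti w inter_subset_right))
  have hZ := Set.ncard_union_add_ncard_inter (zeroCols c w S) (zeroCols c w T)
  have hcard := card_union_add_card_inter S T
  rw [zeroCols_union] at hunion ⊢
  omega
end

section
/- Every nondegenerate maximal simplex with vertices among the vertices of a product of two simplices Δ^a × Δ^b has an exterior facet: among any a+b+1 vertices of Δ^a × Δ^b spanning a simplex, some coordinate column of their standard matrix contains at most one nonzero entry, so a+b of the vertices lie in a common facet of the polytope. -/
/-- A vertex of `Δ^a × Δ^b` in standard coordinates: a 0/1 vector in `ℝ^{a+b+2}` with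
exactly one 1 among the first `a+1` coordinates and exactly one 1 among the last `b+1`. -/
def IsProdVertex (a b : ℕ) (x : Fin (a + 1) ⊕ Fin (b + 1) → ℝ) : Prop :=
  (∀ z, x z = 0 ∨ x z = 1) ∧
    (∑ i : Fin (a + 1), x (Sum.inl i)) = 1 ∧ (∑ j : Fin (b + 1), x (Sum.inr j)) = 1

/-!
The standard matrix of the `a + b + 1` vertices has two nonzero entries in every row, hence
`2 (a + b + 1)` nonzero entries in total, spread over `a + b + 2` columns. By pigeonhole some
column has at most one nonzero entry, and the `a + b` vertices vanishing there lie in the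
corresponding facet of `Δ^a × Δ^b`.
-/

open Finset

lemma natCast_card_support_eq_sum {ι R : Type*} [Fintype ι] [AddCommMonoidWithOne R]
    [DecidableEq R] {x : ι → R} (hx : ∀ i, x i = 0 ∨ x i = 1) :
    (#{i | x i ≠ 0} : R) = ∑ i, x i := by
  rw [natCast_card_filter]
  refine sum_congr rfl fun i _ => ?_
  split_ifs with hi
  · exact ((hx i).resolve_left hi).symm
  · exact (not_not.mp hi).symm

lemma IsProdVertex.card_support {a b : ℕ} {x : Fin (a + 1) ⊕ Fin (b + 1) → ℝ}
    (hx : IsProdVertex a b x) : #{z | x z ≠ 0} = 2 := by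
  obtain ⟨h01, hl, hr⟩ := hx
  have : (#{z | x z ≠ 0} : ℝ) = 2 := by
    rw [natCast_card_support_eq_sum h01, Fintype.sum_sum_type, hl, hr]
    norm_num
  exact_mod_cast this

lemma exists_card_filter_lt_of_forall_card_filter_le {ι κ : Type*} [Fintype ι] [Fintype κ]
    (p : ι → κ → Prop) [∀ r z, Decidable (p r z)] {k : ℕ} (hrow : ∀ r, #{z | p r z} ≤ k)
    (hcard : k * Fintype.card ι < k * Fintype.card κ) :
    ∃ z, #{r | p r z} < k := by
  have hsum : ∑ z : κ, #{r | p r z} < ∑ _z : κ, k :=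
    calc ∑ z : κ, #{r | p r z} = ∑ r : ι, #{z | p r z} :=
          (sum_card_bipartiteAbove_eq_sum_card_bipartiteBelow p).symm
      _ ≤ ∑ _r : ι, k := sum_le_sum fun r _ => hrow r
      _ < ∑ _z : κ, k := by simpa [mul_comm] using hcard
  obtain ⟨z, -, hz⟩ := exists_lt_of_sum_lt hsum
  exact ⟨z, hz⟩

theorem stmt14_general (a b : ℕ) (w : Fin (a + b + 1) → (Fin (a + 1) ⊕ Fin (b + 1) → ℝ))
    (hv : ∀ r, IsProdVertex a b (w r)) :
    ∃ z : Fin (a + 1) ⊕ Fin (b + 1),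
      {r : Fin (a + b + 1) | w r z ≠ 0}.ncard ≤ 1 ∧
      ∃ S : Finset (Fin (a + b + 1)), S.card = a + b ∧ ∀ r ∈ S, w r z = 0 := by
  obtain ⟨z, hz⟩ := exists_card_filter_lt_of_forall_card_filter_le (fun r z => w r z ≠ 0)
    (fun r => (hv r).card_support.le) (by simp; omega)
  simp only [ne_eq] at hz
  have hzero : a + b ≤ #{r | w r z = 0} := by
    have := card_filter_add_card_filter_not (s := univ) (fun r => w r z = 0)
    simp only [card_univ, Fintype.card_fin] at this
    omega
  obtain ⟨S, hS, hcard⟩ := exists_subset_card_eq hzero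
  refine ⟨z, ?_, S, hcard, fun r hr => (mem_filter.mp (hS hr)).2⟩
  rw [Set.ncard_eq_toFinset_card']
  simpa [Nat.lt_succ_iff] using hz

/-- Every nondegenerate maximal simplex with vertices among the vertices of `Δ^a × Δ^b` has
an exterior facet: among its `a+b+1` vertices, some coordinate column of the standard
matrix contains at most one nonzero entry, so `a+b` of the vertices lie in a common facet
of the polytope. -/
theorem stmt14 (a b : ℕ) (w : Fin (a + b + 1) → (Fin (a + 1) ⊕ Fin (b + 1) → ℝ))
    (hv : ∀ r, IsProdVertex a b (w r)) (hindep : AffineIndependent ℝ w) :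
    ∃ z : Fin (a + 1) ⊕ Fin (b + 1),
      {r : Fin (a + b + 1) | w r z ≠ 0}.ncard ≤ 1 ∧
      ∃ S : Finset (Fin (a + b + 1)), S.card = a + b ∧ ∀ r ∈ S, w r z = 0 :=
  stmt14_general a b w hv
end

section
/- Every maximal nondegenerate simplex with vertices among the vertices of Δ^a × Δ^b has class exactly 1; consequently every simplicial cover of Δ^a × Δ^b using vertices of the polytope has at least C(a+b, a) simplices, and every vertex triangulation has exactly C(a+b, a) simplices. -/
/-- A vertex of `Δ^a × Δ^b` in reduced coordinates: a 0/1 vector in `ℝ^{a+b}` with at most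
one 1 among the first `a` coordinates and at most one 1 among the last `b` coordinates. -/
def IsRedVertex (a b : ℕ) (x : Fin a ⊕ Fin b → ℝ) : Prop :=
  (∀ z, x z = 0 ∨ x z = 1) ∧
    (∑ i : Fin a, x (Sum.inl i)) ≤ 1 ∧ (∑ j : Fin b, x (Sum.inr j)) ≤ 1

/-- The product of two simplices `Δ^a × Δ^b` in reduced coordinates. -/
def redProd (a b : ℕ) : Set (Fin a ⊕ Fin b → ℝ) :=
  {x | (∀ z, 0 ≤ x z) ∧ (∑ i : Fin a, x (Sum.inl i)) ≤ 1 ∧ (∑ j : Fin b, x (Sum.inr j)) ≤ 1}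

/-- The matrix `[1|M]` whose rows are the `a+b+1` vertices of a maximal simplex prefixed
by a 1; the class of the simplex is the absolute value of its determinant. -/
def classMat (a b : ℕ) (w : Option (Fin a ⊕ Fin b) → (Fin a ⊕ Fin b → ℝ)) :
    Matrix (Option (Fin a ⊕ Fin b)) (Option (Fin a ⊕ Fin b)) ℝ :=
  Matrix.of fun r c => Option.elim c 1 (fun j => w r j)

/-!
Subtracting the columns of the first factor from the all-ones column turns the matrix `[1|M]` of
a simplex with vertices in `Δ^a × Δ^b` into a column-deleted submatrix of the matrix whose rows
are the vertices `(o₁, o₂) ∈ Option (Fin a) × Option (Fin b)`, written as a unit vector in each of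
the two column blocks: the transposed incidence matrix of a bipartite graph. Such a matrix is
totally unimodular (expand along a row with at most one nonzero entry; if there is no such row,
the vector that is `1` on one block and `-1` on the other lies in the kernel), so a nondegenerate
simplex has class `1`. Its volume is then that of the corner `{x ≥ 0, ∑ x ≤ 1} ⊆ ℝ^(a+b)`, which
is `1 / (a+b)!` by Cavalieri's principle, the slices being scaled corners of one dimension less.
Since `Δ^a × Δ^b` has volume `1 / (a! b!) = C(a+b, a) / (a+b)!`, covers and triangulations are
counted by comparing volumes.
-/

open MeasureTheory Set Matrix
open scoped Pointwise

namespace Matrix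

variable {m n R : Type*} [CommRing R] [IsDomain R]

lemma det_eq_zero_of_bipartite_rows [Fintype n] [DecidableEq n] [Nonempty n] (A : Matrix n n R)
    (p : n → Bool) (h01 : ∀ i j, A i j = 0 ∨ A i j = 1)
    (hp : ∀ i j j', p j = p j' → A i j ≠ 0 → A i j' ≠ 0 → j = j')
    (hrow : ∀ i j, ∃ j' ≠ j, A i j' ≠ 0) : A.det = 0 := by
  obtain ⟨j₀⟩ := ‹Nonempty n›
  rw [← exists_mulVec_eq_zero_iff]
  refine ⟨fun j => if p j then 1 else -1, fun h => ?_, funext fun i => ?_⟩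
  · have := congrFun h j₀
    split_ifs at this <;> simp at this
  obtain ⟨j₁, -, hj₁⟩ := hrow i j₀
  obtain ⟨j₂, hj₂₁, hj₂⟩ := hrow i j₁
  have hne : p j₁ ≠ p j₂ := fun h => hj₂₁ (hp _ _ _ h hj₁ hj₂).symm
  rw [mulVec, dotProduct, Fintype.sum_eq_add j₁ j₂ hj₂₁.symm fun j ⟨h₁, h₂⟩ => ?_]
  · simp only [(h01 _ _).resolve_left hj₁, (h01 _ _).resolve_left hj₂]
    cases h₁ : p j₁ <;> cases h₂ : p j₂ <;> simp_all
  · suffices A i j = 0 by simp [this]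
    by_contra hj
    have : p j = p j₁ ∨ p j = p j₂ := by
      revert hne; cases p j <;> cases p j₁ <;> cases p j₂ <;> simp
    rcases this with h | h
    exacts [h₁ (hp _ _ _ h hj hj₁), h₂ (hp _ _ _ h hj hj₂)]

theorem isTotallyUnimodular_of_bipartite_rows (A : Matrix m n R) (p : n → Bool)
    (h01 : ∀ i j, A i j = 0 ∨ A i j = 1)
    (hp : ∀ i j j', p j = p j' → A i j ≠ 0 → A i j' ≠ 0 → j = j') :
    A.IsTotallyUnimodular := by
  intro k f g hf hg
  induction k with
  | zero => exact ⟨1, by simp⟩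
  | succ k ih =>
    by_cases hrow : ∃ i j₀, ∀ j ≠ j₀, A (f i) (g j) = 0
    · obtain ⟨i, j₀, hi⟩ := hrow
      rw [det_succ_row _ i, Fintype.sum_eq_single j₀ fun j hj => by simp [hi j hj]]
      change _ ∈ MonoidHom.mrange SignType.castHom.toMonoidHom
      refine mul_mem (mul_mem (pow_mem (Set.mem_range.2 ⟨-1, by simp⟩) _) ?_)
        (ih _ _ (hf.comp Fin.succAbove_right_injective) (hg.comp Fin.succAbove_right_injective))
      rcases h01 (f i) (g j₀) with h | h
      · exact ⟨0, by simp [h]⟩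
      · exact ⟨1, by simp [h]⟩
    · push Not at hrow
      exact ⟨0, (det_eq_zero_of_bipartite_rows (A.submatrix f g) (p ∘ g)
        (fun i j => h01 (f i) (g j)) (fun i j j' h hj hj' => hg (hp (f i) _ _ h hj hj'))
        hrow).symm⟩

end Matrix

namespace SimplexProduct

section

variable {ι : Type*} [Fintype ι] [DecidableEq ι]

def edgeMatrix {R : Type*} [Ring R] (w : Option ι → ι → R) : Matrix ι ι R :=
  of fun i j => w (some i) j - w none j

lemma det_of_option_elim_eq_det_edgeMatrix {R : Type*} [CommRing R] (w : Option ι → ι → R) :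
    (of fun r c => Option.elim c 1 (w r)).det = (edgeMatrix w).det := by
  let e : Unit ⊕ ι ≃ Option ι := (Equiv.sumComm _ _).trans (Equiv.optionEquivSumPUnit ι).symm
  have : (of fun r c => Option.elim c 1 (w r)).submatrix e e =
      fromBlocks 1 (of fun _ j => w none j) (of fun _ _ => 1) (of fun i j => w (some i) j) := by
    ext (_ | i) (_ | j) <;> simp [e, Equiv.optionEquivSumPUnit]
  rw [← det_submatrix_equiv_self e, this, det_fromBlocks_one₁₁]
  congr 1
  ext i j
  simp [edgeMatrix, mul_apply]

lemma det_of_option_elim_ne_zero {K : Type*} [Field K] {w : Option ι → ι → K}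
    (hw : AffineIndependent K w) : (of fun r c => Option.elim c 1 (w r)).det ≠ 0 := by
  intro h
  obtain ⟨v, hv0, hv⟩ := exists_vecMul_eq_zero_iff.2 h
  refine hv0 (funext fun r => hw.eq_zero_of_sum_eq_zero (s := Finset.univ) ?_ ?_ r
    (Finset.mem_univ r))
  · simpa [vecMul, dotProduct] using congrFun hv none
  · ext j
    simpa [vecMul, dotProduct] using congrFun hv (some j)

def barycentric {R : Type*} [Ring R] (x : ι → R) : Option ι → R :=
  fun o => o.elim (1 - ∑ i, x i) x

lemma eq_zero_or_exists_eq_single {x : ι → ℝ} (h01 : ∀ i, x i = 0 ∨ x i = 1)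
    (hs : ∑ i, x i ≤ 1) : x = 0 ∨ ∃ i, x = Pi.single i 1 := by
  by_cases h : ∃ i, x i ≠ 0
  · obtain ⟨i, hi⟩ := h
    have hxi : x i = 1 := (h01 i).resolve_left hi
    refine Or.inr ⟨i, funext fun j => ?_⟩
    rcases eq_or_ne j i with rfl | hji
    · simpa using hxi
    · rw [Pi.single_eq_of_ne hji]
      refine (h01 j).resolve_right fun hxj => ?_
      have : x i + x j ≤ ∑ k, x k := by
        rw [← Finset.sum_pair hji.symm]
        exact Finset.sum_le_sum_of_subset_of_nonneg (Finset.subset_univ _)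
          fun k _ _ => (h01 k).elim ge_of_eq fun h => h ▸ zero_le_one
      linarith
  · push Not at h
    exact Or.inl (funext h)

lemma exists_barycentric_eq_single {x : ι → ℝ} (h01 : ∀ i, x i = 0 ∨ x i = 1)
    (hs : ∑ i, x i ≤ 1) : ∃ o, barycentric x = Pi.single o 1 := by
  rcases eq_zero_or_exists_eq_single h01 hs with rfl | ⟨i, rfl⟩
  · refine ⟨none, funext fun o => ?_⟩
    rcases o with _ | j <;> simp [barycentric]
  · refine ⟨some i, funext fun o => ?_⟩
    rcases o with _ | j
    · simp [barycentric]
    · simp [barycentric, Pi.single_apply]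

end

variable {a b : ℕ}

lemma _root_.IsRedVertex.exists_barycentric_eq_single {x : Fin a ⊕ Fin b → ℝ}
    (hx : IsRedVertex a b x) :
    (∃ o, barycentric (fun i => x (.inl i)) = Pi.single o 1) ∧
      ∃ o, barycentric (fun j => x (.inr j)) = Pi.single o 1 :=
  ⟨SimplexProduct.exists_barycentric_eq_single (fun _ => hx.1 _) hx.2.1,
    SimplexProduct.exists_barycentric_eq_single (fun _ => hx.1 _) hx.2.2⟩

def incidenceMat (w : Option (Fin a ⊕ Fin b) → Fin a ⊕ Fin b → ℝ) :
    Matrix (Option (Fin a ⊕ Fin b)) (Option (Fin a) ⊕ Option (Fin b)) ℝ :=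
  of fun r => Sum.elim (barycentric fun i => w r (.inl i)) (barycentric fun j => w r (.inr j))

lemma isTotallyUnimodular_incidenceMat {w : Option (Fin a ⊕ Fin b) → Fin a ⊕ Fin b → ℝ}
    (hw : ∀ r, IsRedVertex a b (w r)) : (incidenceMat w).IsTotallyUnimodular := by
  refine isTotallyUnimodular_of_bipartite_rows _ Sum.isLeft (fun r c => ?_) fun r c c' hc => ?_
  all_goals
    obtain ⟨⟨o₁, h₁⟩, ⟨o₂, h₂⟩⟩ := (hw r).exists_barycentric_eq_single
  · rcases c with o | o <;> simp [incidenceMat, h₁, h₂, Pi.single_apply] <;> tauto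
  · rcases c with o | o <;> rcases c' with o' | o' <;> simp_all [incidenceMat, Pi.single_apply]

def toIncidenceCol : Option (Fin a ⊕ Fin b) → Option (Fin a) ⊕ Option (Fin b) :=
  fun c => c.elim (.inl none) (Sum.elim (.inl ∘ some) (.inr ∘ some))

lemma det_classMat_eq_det_incidenceMat (w : Option (Fin a ⊕ Fin b) → Fin a ⊕ Fin b → ℝ) :
    (classMat a b w).det = ((incidenceMat w).submatrix id toIncidenceCol).det := by
  set c : Option (Fin a ⊕ Fin b) → ℝ := fun k => k.elim 1 (Sum.elim (fun _ => -1) fun _ => 0)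
  have : (incidenceMat w).submatrix id toIncidenceCol =
      (classMat a b w).updateCol none (fun r => ∑ k, c k • classMat a b w r k) := by
    ext r (_ | i | j) <;> simp [incidenceMat, barycentric, classMat, toIncidenceCol, c,
      Fintype.sum_option, Fintype.sum_sum_type, sub_eq_add_neg]
  rw [this, det_updateCol_sum]
  simp [c]

theorem abs_det_classMat_eq_one {w : Option (Fin a ⊕ Fin b) → Fin a ⊕ Fin b → ℝ}
    (hw : ∀ r, IsRedVertex a b (w r)) (hind : AffineIndependent ℝ w) :
    |(classMat a b w).det| = 1 := by
  have hne : (classMat a b w).det ≠ 0 := det_of_option_elim_ne_zero hind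
  obtain ⟨s, hs⟩ := (isTotallyUnimodular_iff_fintype _).1
    ((isTotallyUnimodular_incidenceMat hw).submatrix id toIncidenceCol) _ id id
  rw [submatrix_id_id, ← det_classMat_eq_det_incidenceMat] at hs
  rw [← hs] at hne ⊢
  rcases s with _ | _ | _ <;> simp at hne ⊢

section

def corner (ι : Type*) [Fintype ι] (t : ℝ) : Set (ι → ℝ) :=
  {x | (∀ i, 0 ≤ x i) ∧ ∑ i, x i ≤ t}

variable {ι : Type*} [Fintype ι]

lemma isClosed_corner (t : ℝ) : IsClosed (corner ι t) := by
  simp only [corner, ofPred_and, ofPred_forall]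
  exact (isClosed_iInter fun i => isClosed_le continuous_const (continuous_apply i)).inter
    (isClosed_le (continuous_finsetSum _ fun i _ => continuous_apply i) continuous_const)

lemma convex_corner (t : ℝ) : Convex ℝ (corner ι t) := by
  rintro x ⟨hx0, hx⟩ y ⟨hy0, hy⟩ α β hα hβ hαβ
  refine ⟨fun i => add_nonneg (mul_nonneg hα (hx0 i)) (mul_nonneg hβ (hy0 i)), ?_⟩
  calc ∑ i, (α • x + β • y) i = α * ∑ i, x i + β * ∑ i, y i := by
        simp [Finset.sum_add_distrib, Finset.mul_sum]
    _ ≤ α * t + β * t := by gcongr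
    _ = t := by rw [← add_mul, hαβ, one_mul]

lemma corner_eq_empty {t : ℝ} (ht : t < 0) : corner ι t = ∅ :=
  eq_empty_of_forall_notMem fun _ hx =>
    (Finset.sum_nonneg fun i _ => hx.1 i).not_gt (hx.2.trans_lt ht)

lemma corner_eq_smul {t : ℝ} (ht : 0 ≤ t) : corner ι t = t • corner ι 1 := by
  ext x
  constructor
  · rintro ⟨hx0, hxt⟩
    rcases ht.eq_or_lt with rfl | ht
    · have : x = 0 := funext fun i =>
        (Finset.sum_eq_zero_iff_of_nonneg fun i _ => hx0 i).1
          (le_antisymm hxt (Finset.sum_nonneg fun i _ => hx0 i)) i (Finset.mem_univ i)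
      exact ⟨0, ⟨fun _ => le_rfl, by simp⟩, by simp [this]⟩
    · refine ⟨t⁻¹ • x, ⟨fun i => ?_, ?_⟩, smul_inv_smul₀ ht.ne' x⟩
      · simpa using mul_nonneg (inv_nonneg.2 ht.le) (hx0 i)
      · simpa [← Finset.mul_sum, inv_mul_le_iff₀ ht] using hxt
  · rintro ⟨y, ⟨hy0, hy1⟩, rfl⟩
    refine ⟨fun i => mul_nonneg ht (hy0 i), ?_⟩
    simpa [← Finset.mul_sum] using mul_le_mul_of_nonneg_left hy1 ht

lemma volume_corner_eq_pow_mul {t : ℝ} (ht : 0 ≤ t) :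
    volume (corner ι t) = ENNReal.ofReal (t ^ Fintype.card ι) * volume (corner ι 1) := by
  rw [corner_eq_smul ht, Measure.addHaar_smul, Module.finrank_fintype_fun_eq_card,
    abs_of_nonneg (pow_nonneg ht _)]

lemma cons_mem_corner {n : ℕ} {s t : ℝ} {x : Fin n → ℝ} :
    (Fin.cons s x : Fin (n + 1) → ℝ) ∈ corner (Fin (n + 1)) t ↔
      0 ≤ s ∧ x ∈ corner (Fin n) (t - s) := by
  simp only [corner, mem_ofPred_eq, Fin.forall_fin_succ, Fin.sum_univ_succ, Fin.cons_zero,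
    Fin.cons_succ, le_sub_iff_add_le', and_assoc]

lemma lintegral_one_sub_pow (n : ℕ) :
    ∫⁻ s in Icc (0 : ℝ) 1, ENNReal.ofReal ((1 - s) ^ n) = ENNReal.ofReal (n + 1 : ℝ)⁻¹ := by
  rw [← ofReal_integral_eq_lintegral_ofReal, integral_Icc_eq_integral_Ioc,
    ← intervalIntegral.integral_of_le zero_le_one,
    intervalIntegral.integral_comp_sub_left (fun s => s ^ n)]
  · simp
  · exact (continuous_const.sub continuous_id).pow n |>.integrableOn_Icc
  · exact ae_restrict_of_forall_mem measurableSet_Icc fun s hs =>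
      pow_nonneg (sub_nonneg.2 hs.2) n

lemma volume_corner_fin_succ (n : ℕ) :
    volume (corner (Fin (n + 1)) 1) =
      ENNReal.ofReal (n + 1 : ℝ)⁻¹ * volume (corner (Fin n) 1) := by
  let e := (MeasurableEquiv.piFinSuccAbove (fun _ : Fin (n + 1) => ℝ) 0).symm
  have hslice (s : ℝ) : volume (Prod.mk s ⁻¹' (e ⁻¹' corner (Fin (n + 1)) 1)) =
      (Icc 0 1).indicator
        (fun s => ENNReal.ofReal ((1 - s) ^ n) * volume (corner (Fin n) 1)) s := by
    have : Prod.mk s ⁻¹' (e ⁻¹' corner (Fin (n + 1)) 1) =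
        {x | 0 ≤ s ∧ x ∈ corner (Fin n) (1 - s)} := by
      ext x
      show Fin.insertNth (α := fun _ => ℝ) 0 s x ∈ corner (Fin (n + 1)) 1 ↔ _
      rw [Fin.insertNth_zero']
      exact cons_mem_corner
    rw [this]
    by_cases hs : s ∈ Icc 0 1
    · simp [hs.1, indicator_of_mem hs, volume_corner_eq_pow_mul (sub_nonneg.2 hs.2)]
    · rw [indicator_of_notMem hs]
      rcases not_and_or.1 hs with hs | hs
      · simp [hs]
      · simp [corner_eq_empty (sub_neg.2 (not_le.1 hs))]
  have hmeas := (isClosed_corner (ι := Fin (n + 1)) 1).measurableSet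
  rw [← (volume_preserving_piFinSuccAbove (fun _ => ℝ) 0).symm.measure_preimage
      hmeas.nullMeasurableSet, Measure.volume_eq_prod,
    Measure.prod_apply (hmeas.preimage e.measurable)]
  simp_rw [hslice]
  rw [lintegral_indicator measurableSet_Icc, lintegral_mul_const _ (by fun_prop),
    lintegral_one_sub_pow]

lemma volume_corner_fin (n : ℕ) :
    volume (corner (Fin n) 1) = ENNReal.ofReal (n.factorial : ℝ)⁻¹ := by
  induction n with
  | zero =>
    have : corner (Fin 0) 1 = univ := by ext x; simp [corner]
    simp [this, volume_pi]
  | succ n ih =>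
    rw [volume_corner_fin_succ, ih, ← ENNReal.ofReal_mul (by positivity), Nat.factorial_succ]
    push_cast
    rw [mul_inv]

lemma preimage_piCongrLeft_corner {κ : Type*} [Fintype κ] (e : κ ≃ ι) (t : ℝ) :
    MeasurableEquiv.piCongrLeft (fun _ => ℝ) e ⁻¹' corner ι t = corner κ t := by
  ext y
  simp only [corner, mem_preimage, mem_ofPred_eq, MeasurableEquiv.coe_piCongrLeft]
  rw [← e.forall_congr_right, ← e.sum_comp]
  simp only [Equiv.piCongrLeft_apply_apply]

lemma volume_corner :
    volume (corner ι 1) = ENNReal.ofReal ((Fintype.card ι).factorial : ℝ)⁻¹ := by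
  rw [← volume_corner_fin, ← preimage_piCongrLeft_corner (Fintype.equivFin ι).symm,
    (volume_measurePreserving_piCongrLeft (fun _ => ℝ) _).measure_preimage
      (isClosed_corner 1).measurableSet.nullMeasurableSet]

variable [DecidableEq ι]

def cornerVertex (ι : Type*) [DecidableEq ι] : Option ι → ι → ℝ :=
  fun o => o.elim 0 fun i => Pi.single i 1

lemma convexHull_range_cornerVertex : convexHull ℝ (range (cornerVertex ι)) = corner ι 1 := by
  refine Subset.antisymm (convexHull_min ?_ (convex_corner 1)) fun x hx => ?_
  · rintro _ ⟨_ | i, rfl⟩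
    · simp [cornerVertex, corner]
    · refine ⟨fun j => ?_, by simp [cornerVertex]⟩
      rcases eq_or_ne j i with rfl | h <;> simp [cornerVertex, *]
  · have hx' : ∑ o, barycentric x o • cornerVertex ι o = x := by
      ext j
      simp [Fintype.sum_option, barycentric, cornerVertex, Finset.sum_apply, Pi.single_apply]
    rw [← hx']
    refine (convex_convexHull ℝ _).sum_mem (fun o _ => ?_)
      (by simp [Fintype.sum_option, barycentric])
      fun o _ => subset_convexHull ℝ _ (mem_range_self o)
    rcases o with _ | i
    · simpa [barycentric] using hx.2
    · exact hx.1 i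

lemma volume_convexHull (w : Option ι → ι → ℝ) :
    volume (convexHull ℝ (range w)) =
      ENNReal.ofReal |(edgeMatrix w).det| * volume (corner ι 1) := by
  let L := toLin' (edgeMatrix w)ᵀ
  let g : (ι → ℝ) →ᵃ[ℝ] (ι → ℝ) := L.toAffineMap + AffineMap.const ℝ _ (w none)
  have hg : g ∘ cornerVertex ι = w := by
    funext o
    rcases o with _ | i
    · simp [g, cornerVertex]
    · ext j
      simp [g, L, cornerVertex, edgeMatrix]
  have himage : g '' corner ι 1 = (· + w none) '' (L '' corner ι 1) := by
    rw [image_image]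
    rfl
  nth_rw 1 [← hg]
  rw [range_comp, ← AffineMap.image_convexHull, convexHull_range_cornerVertex, himage,
    image_add_right, measure_preimage_add_right, Measure.addHaar_image_linearMap,
    LinearMap.det_toLin', det_transpose]

end

lemma volume_convexHull_of_isRedVertex {w : Option (Fin a ⊕ Fin b) → Fin a ⊕ Fin b → ℝ}
    (hw : ∀ r, IsRedVertex a b (w r)) (hind : AffineIndependent ℝ w) :
    volume (convexHull ℝ (range w)) = ENNReal.ofReal ((a + b).factorial : ℝ)⁻¹ := by
  have h := abs_det_classMat_eq_one hw hind
  rw [classMat, det_of_option_elim_eq_det_edgeMatrix] at h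
  rw [volume_convexHull, h, volume_corner, Fintype.card_sum, Fintype.card_fin, Fintype.card_fin,
    ENNReal.ofReal_one, one_mul]

lemma volume_redProd (a b : ℕ) :
    volume (redProd a b) = (a + b).choose a * ENNReal.ofReal ((a + b).factorial : ℝ)⁻¹ := by
  have hpre : MeasurableEquiv.sumPiEquivProdPi (fun _ : Fin a ⊕ Fin b => ℝ) ⁻¹'
      (corner (Fin a) 1 ×ˢ corner (Fin b) 1) = redProd a b := by
    ext x
    simp [corner, redProd, MeasurableEquiv.coe_sumPiEquivProdPi, Equiv.sumPiEquivProdPi,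
      Sum.forall, and_assoc, and_left_comm]
  rw [← hpre, (volume_measurePreserving_sumPiEquivProdPi _).measure_preimage
      ((isClosed_corner 1).prod (isClosed_corner 1)).measurableSet.nullMeasurableSet,
    Measure.volume_eq_prod, Measure.prod_prod, volume_corner_fin, volume_corner_fin,
    ← ENNReal.ofReal_natCast, ← ENNReal.ofReal_mul (by positivity),
    ← ENNReal.ofReal_mul (by positivity)]
  congr 1
  rw [Nat.cast_choose ℝ (Nat.le_add_right a b), Nat.add_sub_cancel_left]
  field_simp

lemma ofReal_inv_factorial_ne_zero (n : ℕ) : ENNReal.ofReal (n.factorial : ℝ)⁻¹ ≠ 0 :=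
  (ENNReal.ofReal_pos.2 (by positivity)).ne'

theorem choose_le_of_iUnion_convexHull_eq {m : ℕ}
    {f : Fin m → Option (Fin a ⊕ Fin b) → Fin a ⊕ Fin b → ℝ}
    (hv : ∀ i r, IsRedVertex a b (f i r)) (hind : ∀ i, AffineIndependent ℝ (f i))
    (hcover : ⋃ i, convexHull ℝ (range (f i)) = redProd a b) : (a + b).choose a ≤ m := by
  have hle : volume (redProd a b) ≤ ∑ i, volume (convexHull ℝ (range (f i))) :=
    hcover ▸ measure_iUnion_fintype_le _ _
  simp only [volume_redProd, volume_convexHull_of_isRedVertex (hv _) (hind _), Finset.sum_const,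
    Finset.card_univ, Fintype.card_fin, nsmul_eq_mul] at hle
  exact_mod_cast
    (ENNReal.mul_le_mul_iff_left (ofReal_inv_factorial_ne_zero _) ENNReal.ofReal_ne_top).1 hle

theorem le_choose_of_pairwise_disjoint_interior {m : ℕ}
    {f : Fin m → Option (Fin a ⊕ Fin b) → Fin a ⊕ Fin b → ℝ}
    (hv : ∀ i r, IsRedVertex a b (f i r)) (hind : ∀ i, AffineIndependent ℝ (f i))
    (hsub : ⋃ i, convexHull ℝ (range (f i)) ⊆ redProd a b)
    (hdisj : Pairwise fun i j =>
      interior (convexHull ℝ (range (f i))) ∩ interior (convexHull ℝ (range (f j))) = ∅) :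
    m ≤ (a + b).choose a := by
  have hint (i : Fin m) : volume (interior (convexHull ℝ (range (f i)))) =
      ENNReal.ofReal ((a + b).factorial : ℝ)⁻¹ := by
    rw [measure_interior_of_null_frontier ((convex_convexHull ℝ _).addHaar_frontier volume),
      volume_convexHull_of_isRedVertex (hv i) (hind i)]
  have hle : ∑ i, volume (interior (convexHull ℝ (range (f i)))) ≤ volume (redProd a b) := by
    rw [← tsum_fintype (L := .unconditional _),
      ← measure_iUnion (fun i j hij => disjoint_iff_inter_eq_empty.2 (hdisj hij))
        fun i => isOpen_interior.measurableSet]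
    exact measure_mono ((iUnion_mono fun i => interior_subset).trans hsub)
  simp only [hint, volume_redProd, Finset.sum_const, Finset.card_univ, Fintype.card_fin,
    nsmul_eq_mul] at hle
  exact_mod_cast
    (ENNReal.mul_le_mul_iff_left (ofReal_inv_factorial_ne_zero _) ENNReal.ofReal_ne_top).1 hle

end SimplexProduct

/-- Every maximal nondegenerate simplex with vertices among the vertices of `Δ^a × Δ^b`
has class exactly 1; consequently every simplicial cover of `Δ^a × Δ^b` using vertices of
the polytope has at least `C(a+b, a)` simplices, and every vertex triangulation (a cover
whose simplices have pairwise disjoint interiors) has exactly `C(a+b, a)` simplices. -/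
theorem stmt15 (a b : ℕ) :
    (∀ w : Option (Fin a ⊕ Fin b) → (Fin a ⊕ Fin b → ℝ),
      (∀ r, IsRedVertex a b (w r)) → AffineIndependent ℝ w →
        |(classMat a b w).det| = 1) ∧
    (∀ (m : ℕ) (f : Fin m → Option (Fin a ⊕ Fin b) → (Fin a ⊕ Fin b → ℝ)),
      (∀ i r, IsRedVertex a b (f i r)) → (∀ i, AffineIndependent ℝ (f i)) →
      (⋃ i, convexHull ℝ (Set.range (f i))) = redProd a b →
        (a + b).choose a ≤ m) ∧
    (∀ (m : ℕ) (f : Fin m → Option (Fin a ⊕ Fin b) → (Fin a ⊕ Fin b → ℝ)),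
      (∀ i r, IsRedVertex a b (f i r)) → (∀ i, AffineIndependent ℝ (f i)) →
      (⋃ i, convexHull ℝ (Set.range (f i))) = redProd a b →
      (Pairwise fun i j =>
        interior (convexHull ℝ (Set.range (f i))) ∩
          interior (convexHull ℝ (Set.range (f j))) = ∅) →
        m = (a + b).choose a) := by
  refine ⟨fun w hv hind => SimplexProduct.abs_det_classMat_eq_one hv hind,
    fun m f hv hind hcover => SimplexProduct.choose_le_of_iUnion_convexHull_eq hv hind hcover,
    fun m f hv hind hcover hdisj => le_antisymm ?_ ?_⟩
  · exact SimplexProduct.le_choose_of_pairwise_disjoint_interior hv hind hcover.subset hdisj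
  · exact SimplexProduct.choose_le_of_iUnion_convexHull_eq hv hind hcover
end
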